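/- arXiv:1504.01014 — 4 statements merged into one kernel-verified Lean document; each statement's English description precedes it below -/
import Mathlib

section
/- Let U be an n×n unitary complex matrix and set μ := max_{i,j} |U_{ij}| (this equals the induced 1→∞ operator norm of U). Then for every nonzero x ∈ ℂⁿ, one has ns(x) · ns(Ux) ≥ 1/μ². -/
open scoped BigOperators

/-- Number of nonzero entries ("0-norm"). -/
noncomputable def norm0 {N : Type*} (x : N → ℂ) : ℕ := Nat.card {i // x i ≠ 0}

/-- The 1-norm. -/
noncomputable def norm1 {N : Type*} [Fintype N] (x : N → ℂ) : ℝ := ∑ i, ‖x i‖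

/-- The squared 2-norm. -/
noncomputable def norm2sq {N : Type*} [Fintype N] (x : N → ℂ) : ℝ := ∑ i, ‖x i‖ ^ 2

/-- Numerical sparsity: `ns x = ‖x‖₁² / ‖x‖₂²`. -/
noncomputable def ns {N : Type*} [Fintype N] (x : N → ℂ) : ℝ := norm1 x ^ 2 / norm2sq x

/-- The unitary discrete Fourier transform on `ℂ^(ZMod n)`. -/
noncomputable def dft (n : ℕ) [NeZero n] (x : ZMod n → ℂ) : ZMod n → ℂ := fun k =>
  (1 / Real.sqrt n : ℝ) *
    ∑ j : ZMod n, x j *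
      Complex.exp (-(2 * (Real.pi : ℂ) * Complex.I * (j.val : ℂ) * (k.val : ℂ)) / (n : ℂ))

/-! Unitarity gives `‖Ux‖₂ = ‖x‖₂`, and each entry of `Ux` has modulus at most `μ ‖x‖₁`. Hence
`‖x‖₂² = ‖Ux‖₂² ≤ ‖Ux‖_∞ ‖Ux‖₁ ≤ μ ‖x‖₁ ‖Ux‖₁`, that is,
`√(ns x · ns (Ux)) = ‖x‖₁ ‖Ux‖₁ / ‖x‖₂² ≥ 1/μ`. -/

section NumericalSparsity

open Matrix

variable {N : Type*} [Fintype N]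

lemma norm1_nonneg (x : N → ℂ) : 0 ≤ norm1 x :=
  Finset.sum_nonneg fun _ _ => norm_nonneg _

lemma norm2sq_pos {x : N → ℂ} (hx : x ≠ 0) : 0 < norm2sq x := by
  obtain ⟨i, hi⟩ := Function.ne_iff.mp hx
  exact Finset.sum_pos' (fun _ _ => by positivity)
    ⟨i, Finset.mem_univ i, by positivity [norm_pos_iff.mpr hi]⟩

lemma norm2sq_eq_re_star_dotProduct (x : N → ℂ) : norm2sq x = (star x ⬝ᵥ x).re := by
  simp only [norm2sq, dotProduct, Complex.re_sum, Pi.star_apply, RCLike.star_def,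
    Complex.conj_mul', ← Complex.ofReal_pow, Complex.ofReal_re]

lemma norm2sq_mulVec_of_mem_unitaryGroup [DecidableEq N] {U : Matrix N N ℂ}
    (hU : U ∈ unitaryGroup N ℂ) (x : N → ℂ) : norm2sq (U *ᵥ x) = norm2sq x := by
  rw [norm2sq_eq_re_star_dotProduct, norm2sq_eq_re_star_dotProduct, star_mulVec,
    dotProduct_mulVec, vecMul_vecMul, ← star_eq_conjTranspose, mem_unitaryGroup_iff'.mp hU,
    vecMul_one]

lemma norm_mulVec_apply_le {M : Type*} {A : Matrix M N ℂ} {μ : ℝ} (hA : ∀ i j, ‖A i j‖ ≤ μ)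
    (x : N → ℂ) (i : M) : ‖(A *ᵥ x) i‖ ≤ μ * norm1 x :=
  calc ‖(A *ᵥ x) i‖ ≤ ∑ j, ‖A i j‖ * ‖x j‖ := by
        simpa only [mulVec, dotProduct, norm_mul] using
          norm_sum_le Finset.univ fun j => A i j * x j
    _ ≤ ∑ j, μ * ‖x j‖ := by gcongr with j; exact hA i j
    _ = μ * norm1 x := by rw [norm1, Finset.mul_sum]

lemma norm2sq_le_mul_norm1 {y : N → ℂ} {c : ℝ} (hy : ∀ i, ‖y i‖ ≤ c) :
    norm2sq y ≤ c * norm1 y :=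
  calc norm2sq y = ∑ i, ‖y i‖ * ‖y i‖ := by simp only [norm2sq, sq]
    _ ≤ ∑ i, c * ‖y i‖ := by gcongr with i; exact hy i
    _ = c * norm1 y := by rw [norm1, Finset.mul_sum]

lemma one_div_sq_le_ns_mul_ns {M : Type*} [Fintype M] {x : N → ℂ} {y : M → ℂ} {μ : ℝ}
    (hx : 0 < norm2sq x) (hyx : norm2sq y = norm2sq x)
    (hμ : norm2sq x ≤ μ * norm1 x * norm1 y) : 1 / μ ^ 2 ≤ ns x * ns y := by
  have hμ_pos : 0 < μ := by
    by_contra! h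
    have := mul_nonpos_of_nonpos_of_nonneg
      (mul_nonpos_of_nonpos_of_nonneg h (norm1_nonneg x)) (norm1_nonneg y)
    linarith
  have h : 1 / μ ≤ norm1 x * norm1 y / norm2sq x := by
    rw [div_le_div_iff₀ hμ_pos hx]
    linarith
  calc 1 / μ ^ 2 = (1 / μ) ^ 2 := by rw [div_pow, one_pow]
    _ ≤ (norm1 x * norm1 y / norm2sq x) ^ 2 := by gcongr
    _ = ns x * ns y := by rw [ns, ns, hyx]; field_simp

end NumericalSparsity

/-- Multiplicative uncertainty principle: if `U` is an `n × n` unitary matrix and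
`μ = max_{i,j} |U_{ij}|`, then `ns(x) · ns(Ux) ≥ 1/μ²` for every nonzero `x ∈ ℂⁿ`. -/
theorem multiplicative_uncertainty_principle (n : ℕ) (U : Matrix (Fin n) (Fin n) ℂ)
    (hU : U ∈ Matrix.unitaryGroup (Fin n) ℂ) (μ : ℝ)
    (hμ : IsGreatest {a : ℝ | ∃ i j, a = ‖U i j‖} μ)
    (x : Fin n → ℂ) (hx : x ≠ 0) :
    ns x * ns (U.mulVec x) ≥ 1 / μ ^ 2 := by
  have hUμ : ∀ i j, ‖U i j‖ ≤ μ := fun i j => hμ.2 ⟨i, j, rfl⟩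
  have hpreserve := norm2sq_mulVec_of_mem_unitaryGroup hU x
  refine one_div_sq_le_ns_mul_ns (norm2sq_pos hx) hpreserve ?_
  calc norm2sq x = norm2sq (U.mulVec x) := hpreserve.symm
    _ ≤ μ * norm1 x * norm1 (U.mulVec x) :=
      norm2sq_le_mul_norm1 (norm_mulVec_apply_le hUμ x)
end

section
/- Let n, k be positive integers and let F be the unitary discrete Fourier transform on ℂ^(ZMod n). Suppose x ∈ ℂ^(ZMod n) satisfies ‖x‖₀ ≤ k and ‖x‖₂² = n/k. Then (1/n)·Σ_{j∈ZMod n} |(Fx)[j]| ≥ 1/k and (1/n)·Σ_{j∈ZMod n} |(Fx)[j]|² = 1/k; equivalently, if j is drawn uniformly from ZMod n and Y := |(Fx)[j]|, then E[Y] ≥ 1/k and E[Y²] = 1/k. -/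
open scoped BigOperators

/-!
The second moment is Parseval's identity: the unitary DFT preserves `‖x‖₂² = n/k`. For the first
moment, Cauchy–Schwarz on the support of `x` gives `‖x‖₁² ≤ ‖x‖₀ ‖x‖₂² ≤ n`, so every Fourier
coefficient satisfies `|(Fx)[j]| ≤ ‖x‖₁ / √n ≤ 1`, hence `|(Fx)[j]|² ≤ |(Fx)[j]|`.
-/

open Finset ComplexConjugate
open scoped ZMod

theorem norm1_sq_le_norm0_mul_norm2sq {N : Type*} [Fintype N] (x : N → ℂ) :
    norm1 x ^ 2 ≤ norm0 x * norm2sq x := by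
  classical
  set s := univ.filter (fun i => x i ≠ 0)
  have hs : norm0 x = #s := by rw [norm0, Nat.card_eq_fintype_card, Fintype.card_subtype]
  have h1 : ∑ i ∈ s, ‖x i‖ = norm1 x :=
    sum_filter_of_ne fun i _ h => norm_ne_zero_iff.mp h
  have h2 : ∑ i ∈ s, ‖x i‖ ^ 2 = norm2sq x :=
    sum_filter_of_ne fun i _ h => norm_ne_zero_iff.mp (pow_ne_zero_iff two_ne_zero |>.mp h)
  rw [hs, ← h1, ← h2]
  exact sq_sum_le_card_mul_sum_sq

namespace ZMod

variable {n : ℕ} [NeZero n]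

theorem norm_dft_le_norm1 (x : ZMod n → ℂ) (k : ZMod n) : ‖𝓕 x k‖ ≤ norm1 x := by
  rw [dft_apply]
  refine (norm_sum_le _ _).trans (sum_le_sum fun j _ => ?_)
  rw [norm_smul, AddChar.norm_apply, one_mul]

theorem sum_conj_dft_mul (x y : ZMod n → ℂ) :
    ∑ k, conj (𝓕 x k) * y k = ∑ j, conj (x j) * 𝓕 y (-j) := by
  simp only [dft_apply, map_sum, sum_mul, mul_sum, smul_eq_mul, map_mul,
    ← AddChar.map_neg_eq_conj]
  rw [sum_comm]
  refine sum_congr rfl fun j _ => sum_congr rfl fun k _ => ?_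
  simp only [mul_neg, neg_neg, mul_comm k j]
  ring

theorem sum_sq_norm_dft (x : ZMod n → ℂ) : ∑ k, ‖𝓕 x k‖ ^ 2 = n * ∑ j, ‖x j‖ ^ 2 := by
  -- `𝓕 (𝓕 x) (-j) = n • x j` by Fourier inversion
  have h := sum_conj_dft_mul x (𝓕 x)
  simp only [dft_dft, neg_neg, smul_eq_mul, mul_left_comm _ (n : ℂ), ← mul_sum,
    ← Complex.normSq_eq_conj_mul_self, ← Complex.sq_norm] at h
  exact_mod_cast h

end ZMod

section UnitaryDFT

variable {n : ℕ} [NeZero n]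

theorem dft_eq_inv_sqrt_mul (x : ZMod n → ℂ) (k : ZMod n) :
    dft n x k = ((Real.sqrt n)⁻¹ : ℝ) * 𝓕 x k := by
  rw [dft, ZMod.dft_apply, one_div]
  congr 1
  refine sum_congr rfl fun j _ => ?_
  have : -(j * k) = ((-(j.val * k.val : ℤ) : ℤ) : ZMod n) := by simp
  rw [smul_eq_mul, mul_comm, this, ZMod.stdAddChar_coe]
  push_cast
  congr 2
  ring

theorem norm_dft (x : ZMod n → ℂ) (k : ZMod n) : ‖dft n x k‖ = ‖𝓕 x k‖ / Real.sqrt n := by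
  rw [dft_eq_inv_sqrt_mul, norm_mul, Complex.norm_real, Real.norm_of_nonneg (by positivity),
    inv_mul_eq_div]

theorem sum_sq_norm_dft_eq_norm2sq (x : ZMod n → ℂ) : ∑ k, ‖dft n x k‖ ^ 2 = norm2sq x := by
  have hn : (n : ℝ) ≠ 0 := NeZero.ne _
  simp only [norm_dft, div_pow, ← sum_div, ZMod.sum_sq_norm_dft, Real.sq_sqrt n.cast_nonneg]
  rw [norm2sq, mul_div_cancel_left₀ _ hn]

theorem norm_dft_le_one_of_norm0_mul_norm2sq_le {x : ZMod n → ℂ}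
    (hx : norm0 x * norm2sq x ≤ n) (k : ZMod n) : ‖dft n x k‖ ≤ 1 := by
  have hnorm1 : 0 ≤ norm1 x := sum_nonneg fun _ _ => norm_nonneg _
  rw [norm_dft, div_le_one (Real.sqrt_pos_of_pos (Nat.cast_pos.mpr (NeZero.pos n)))]
  calc ‖𝓕 x k‖ ≤ norm1 x := ZMod.norm_dft_le_norm1 x k
    _ ≤ Real.sqrt n := (Real.le_sqrt hnorm1 n.cast_nonneg).mpr
      ((norm1_sq_le_norm0_mul_norm2sq x).trans hx)

end UnitaryDFT

/-- Moment bounds for uniformly sampled Fourier coefficients of a sparse vector: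
if `‖x‖₀ ≤ k` and `‖x‖₂² = n/k`, then the first absolute moment of `|(Fx)[j]|` over a
uniform `j` is at least `1/k` and the second moment equals `1/k`. -/
theorem sparse_fourier_moments (n k : ℕ) [NeZero n] (hk : 0 < k)
    (x : ZMod n → ℂ) (h0 : norm0 x ≤ k) (h2 : norm2sq x = (n : ℝ) / k) :
    (1 / (n : ℝ)) * ∑ j : ZMod n, ‖dft n x j‖ ≥ 1 / k ∧
    (1 / (n : ℝ)) * ∑ j : ZMod n, ‖dft n x j‖ ^ 2 = 1 / k := by
  have hn : (n : ℝ) ≠ 0 := NeZero.ne _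
  have hsecond : (1 / (n : ℝ)) * ∑ j, ‖dft n x j‖ ^ 2 = 1 / k := by
    rw [sum_sq_norm_dft_eq_norm2sq, h2]
    field_simp
  have hsparse : norm0 x * norm2sq x ≤ n :=
    calc (norm0 x : ℝ) * norm2sq x ≤ k * (n / k) := by rw [h2]; gcongr
      _ = n := mul_div_cancel₀ _ (Nat.cast_ne_zero.mpr hk.ne')
  refine ⟨?_, hsecond⟩
  rw [ge_iff_le, ← hsecond]
  gcongr with j
  exact sq_le (norm_nonneg _) (norm_dft_le_one_of_norm0_mul_norm2sq_le hsparse j)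
end

section
/- Let n ≥ 1 and let x ∈ ℂ^(ZMod n) be the discrete Gaussian. Then x is fixed by the unitary discrete Fourier transform: Fx = x. -/
open scoped BigOperators

/-- The discrete Gaussian `x[j] = Σ_{j'∈ℤ} exp(−nπ(j/n + j')²)`. -/
noncomputable def discreteGaussian (n : ℕ) [NeZero n] : ZMod n → ℂ := fun j =>
  ∑' j' : ℤ, (Real.exp (-(n : ℝ) * Real.pi * ((j.val : ℝ) / (n : ℝ) + (j' : ℝ)) ^ 2) : ℂ)

/-!
Write every integer as `t = j + m n` with `j` a residue mod `n`. The phase `exp(-2πi jk/n)`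
depends only on `t mod n`, so the DFT of the discrete Gaussian at `k` unfolds into the single
lattice sum `n^(-1/2) ∑_{t ∈ ℤ} exp(-πt²/n - 2πi tk/n)`. Poisson summation for a modulated
Gaussian (Jacobi's theta transformation) turns `∑_t exp(-πt²/n - 2πi tk/n)` into
`√n ∑_m exp(-nπ(k/n + m)²)`, which is `√n` times the discrete Gaussian at `k`.
-/

open Complex Real

def ZMod.prodIntEquiv (n : ℕ) [NeZero n] : ZMod n × ℤ ≃ ℤ where
  toFun p := (p.1.val : ℤ) + p.2 * n
  invFun t := ((t : ZMod n), t / n)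
  left_inv := by
    rintro ⟨j, m⟩
    have hn : (n : ℤ) ≠ 0 := by exact_mod_cast NeZero.ne n
    ext
    · simp
    · show ((j.val : ℤ) + m * n) / n = m
      rw [Int.add_mul_ediv_right _ _ hn,
        Int.ediv_eq_zero_of_lt (by positivity) (by exact_mod_cast ZMod.val_lt j), zero_add]
  right_inv t := by
    show ((t : ZMod n).val : ℤ) + t / n * n = t
    rw [ZMod.val_intCast, Int.emod_add_ediv_mul]

theorem ZMod.sum_tsum_val_add_mul {E : Type*} [AddCommGroup E] [UniformSpace E]
    [IsUniformAddGroup E] [CompleteSpace E] [T0Space E] (n : ℕ) [NeZero n] {f : ℤ → E}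
    (hf : Summable f) : ∑ j : ZMod n, ∑' m : ℤ, f (j.val + m * n) = ∑' t : ℤ, f t := by
  let e := ZMod.prodIntEquiv n
  calc ∑ j : ZMod n, ∑' m : ℤ, f (j.val + m * n) = ∑' j, ∑' m, (f ∘ e) (j, m) :=
        (tsum_fintype _).symm
    _ = ∑' p, (f ∘ e) p := (e.summable_iff.2 hf).tsum_prod.symm
    _ = ∑' t, f t := e.tsum_eq f

noncomputable def modulatedGaussian (s ξ : ℝ) (t : ℂ) : ℂ :=
  cexp (-π * t ^ 2 / s - 2 * π * I * ξ * t)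

theorem modulatedGaussian_eq_jacobiTheta₂_term (s ξ : ℝ) (t : ℤ) :
    modulatedGaussian s ξ t = jacobiTheta₂_term t (-ξ) (I / s) := by
  rw [modulatedGaussian, jacobiTheta₂_term]
  congr 1
  field_simp
  ring_nf
  rw [I_sq]
  ring

theorem summable_modulatedGaussian {s : ℝ} (hs : 0 < s) (ξ : ℝ) :
    Summable fun t : ℤ ↦ modulatedGaussian s ξ t := by
  simp_rw [modulatedGaussian_eq_jacobiTheta₂_term s]
  rw [summable_jacobiTheta₂_term_iff]
  simpa [div_ofReal_im] using hs

theorem tsum_modulatedGaussian {s : ℝ} (hs : 0 < s) (ξ : ℝ) :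
    ∑' t : ℤ, modulatedGaussian s ξ t =
      √s * ∑' m : ℤ, (rexp (-s * π * (ξ + m) ^ 2) : ℂ) := by
  have ha : 0 < (1 / (s : ℂ)).re := by
    rw [← ofReal_one, ← ofReal_div, ofReal_re]
    positivity
  have hsqrt : 1 / (1 / (s : ℂ)) ^ (1 / 2 : ℂ) = √s := by
    rw [show 1 / (s : ℂ) = (s⁻¹ : ℝ) by push_cast; ring,
      show (1 / 2 : ℂ) = (1 / 2 : ℝ) by push_cast; ring, ← ofReal_cpow (by positivity),
      ← Real.sqrt_eq_rpow, Real.sqrt_inv, ofReal_inv, one_div, inv_inv]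
  calc ∑' t : ℤ, modulatedGaussian s ξ t
      = ∑' t : ℤ, cexp (-π * (1 / s) * t ^ 2 + 2 * π * (-I * ξ) * t) :=
        tsum_congr fun t ↦ by rw [modulatedGaussian]; ring_nf
    _ = √s * ∑' m : ℤ, cexp (-π / (1 / s) * (m + I * (-I * ξ)) ^ 2) := by
        rw [Complex.tsum_exp_neg_quadratic ha, hsqrt]
    _ = √s * ∑' m : ℤ, (rexp (-s * π * (ξ + m) ^ 2) : ℂ) := by
        have hI : I * (-I * ξ) = ξ := by rw [← mul_assoc, mul_neg, I_mul_I, neg_neg, one_mul]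
        congr 1
        refine tsum_congr fun m ↦ ?_
        push_cast
        rw [hI, div_div_eq_mul_div, div_one]
        ring_nf

theorem ofReal_exp_mul_exp_eq_modulatedGaussian {n : ℕ} (hn : n ≠ 0) (j k : ℕ) (m : ℤ) :
    (rexp (-(n : ℝ) * π * ((j : ℝ) / n + m) ^ 2) : ℂ) * cexp (-(2 * π * I * j * k) / n) =
      modulatedGaussian n (k / n) ((j + m * n : ℤ) : ℂ) := by
  have hexp : -π * ((j + m * n : ℤ) : ℂ) ^ 2 / (n : ℝ)
        - 2 * π * I * ((k / n : ℝ) : ℂ) * ((j + m * n : ℤ) : ℂ) =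
      ((-(n : ℝ) * π * ((j : ℝ) / n + m) ^ 2 : ℝ) : ℂ) + -(2 * π * I * j * k) / n
        + ((-(m * k) : ℤ) : ℂ) * (2 * π * I) := by
    push_cast
    field_simp
    ring
  rw [modulatedGaussian, hexp, Complex.exp_add, exp_int_mul_two_pi_mul_I, mul_one,
    Complex.exp_add, ofReal_exp]

/-- The discrete Gaussian is fixed by the unitary discrete Fourier transform. -/
theorem dft_discreteGaussian (n : ℕ) [NeZero n] :
    dft n (discreteGaussian n) = discreteGaussian n := by
  funext k
  have hn : (0 : ℝ) < n := Nat.cast_pos.2 (NeZero.pos n)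
  have hterm (j : ZMod n) : discreteGaussian n j *
      cexp (-(2 * π * I * j.val * k.val) / n) =
        ∑' m : ℤ, modulatedGaussian n (k.val / n) ((j.val + m * n : ℤ) : ℂ) := by
    rw [discreteGaussian, ← tsum_mul_right]
    exact tsum_congr fun m ↦ ofReal_exp_mul_exp_eq_modulatedGaussian (NeZero.ne n) _ _ m
  calc dft n (discreteGaussian n) k
      = (1 / √n : ℝ) * ∑ j : ZMod n, ∑' m : ℤ,
          modulatedGaussian n (k.val / n) ((j.val + m * n : ℤ) : ℂ) := by
        simp only [dft, hterm]
    _ = (1 / √n : ℝ) * ∑' t : ℤ, modulatedGaussian n (k.val / n) t := by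
        rw [ZMod.sum_tsum_val_add_mul n (summable_modulatedGaussian hn _)]
    _ = discreteGaussian n k := by
        rw [tsum_modulatedGaussian hn, discreteGaussian, ← mul_assoc, ← ofReal_mul,
          one_div_mul_cancel (by positivity), ofReal_one, one_mul]
end

section
/- Let n ≥ 3, let F be the unitary discrete Fourier transform on ℂ^(ZMod n), and let [I F] denote the n×2n matrix obtained by concatenating the n×n identity matrix with the matrix of F. If [I F] satisfies the (k,c)-width property for some positive integer k and some c > 0, then k ≤ 2c²·(√n + 1)²/(√(n/2) − 1). (In particular, stable ℓ₁ demixing with [I F] requires k = O(√n): the square-root bottleneck.) -/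
/-!
The periodized Gaussian `g j = ∑ₘ exp (-π (j + m n)² / n)` on `ZMod n` is fixed by the unitary
DFT: by Poisson summation (Jacobi's theta transformation) its transform is again a periodized
Gaussian of the same width. Hence `(-g, g)` lies in the nullspace of `[I F]`, and the width
property bounds `k` by `c²` times the numerical sparsity of `(-g, g)`, which is
`2 (∑ g)² / ∑ g²`. Both sums are Gaussian theta sums over `ℤ`:
`∑ g = ∑ₗ exp (-π l² / n) ≤ 1 + √n` by comparison with the Gaussian integral, and, since the
square of a sum of nonnegative terms dominates the sum of their squares,
`∑ g² ≥ ∑ₗ exp (-2π l² / n) ≥ √(n / 2)` by Poisson summation once more.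
-/

open scoped BigOperators

/-- The matrix of the unitary discrete Fourier transform. -/
noncomputable def dftMatrix (n : ℕ) : Matrix (ZMod n) (ZMod n) ℂ :=
  Matrix.of fun k j =>
    (1 / Real.sqrt n : ℝ) *
      Complex.exp (-(2 * (Real.pi : ℂ) * Complex.I * (j.val : ℂ) * (k.val : ℂ)) / (n : ℂ))

open Real
open scoped Complex

theorem natCast_le_sq_mul_ns_of_sqrt_norm2sq_le {N : Type*} [Fintype N] {x : N → ℂ}
    (hx : 0 < norm2sq x) {k : ℕ} {c : ℝ} (h : √(norm2sq x) ≤ c / √k * norm1 x) :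
    (k : ℝ) ≤ c ^ 2 * ns x := by
  rcases Nat.eq_zero_or_pos k with rfl | hk
  · rw [Nat.cast_zero]
    exact mul_nonneg (sq_nonneg c) (div_nonneg (sq_nonneg _) hx.le)
  have hk' : (0 : ℝ) < k := Nat.cast_pos.2 hk
  have hsq : norm2sq x ≤ c ^ 2 / k * norm1 x ^ 2 := by
    calc norm2sq x = √(norm2sq x) ^ 2 := (sq_sqrt hx.le).symm
      _ ≤ (c / √k * norm1 x) ^ 2 := pow_le_pow_left₀ (sqrt_nonneg _) h 2
      _ = c ^ 2 / k * norm1 x ^ 2 := by rw [mul_pow, div_pow, sq_sqrt hk'.le]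
  rw [ns, mul_div_assoc', le_div_iff₀ hx]
  rw [div_mul_eq_mul_div, le_div_iff₀ hk'] at hsq
  linarith

theorem summable_exp_neg_mul_int_sq {t : ℝ} (ht : 0 < t) :
    Summable fun l : ℤ => exp (-t * l ^ 2) := by
  refine (summable_pow_mul_jacobiTheta₂_term_bound 0 (div_pos ht pi_pos) 0).congr fun l => ?_
  rw [pow_zero, one_mul, mul_zero, zero_mul, sub_zero]
  field_simp

theorem tsum_exp_neg_mul_int_sq_le {t : ℝ} (ht : 0 < t) :
    ∑' l : ℤ, exp (-t * l ^ 2) ≤ 1 + √(π / t) := by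
  set f : ℝ → ℝ := fun x => exp (-t * x ^ 2)
  have hf : Summable fun l : ℤ => f l := summable_exp_neg_mul_int_sq ht
  have hanti : AntitoneOn f (Set.Ici 0) := fun x hx y _ hxy => by
    simp only [f, exp_le_exp, neg_mul, neg_le_neg_iff]
    gcongr
  have htail : ∑' l : ℕ, f (l + 1 : ℕ) ≤ √(π / t) / 2 :=
    (hanti.tsum_add_one_le_integral (integrable_exp_neg_mul_sq ht).integrableOn
      fun _ _ => (exp_pos _).le).trans_eq (integral_gaussian_Ioi t)
  have heven : Function.Even fun l : ℤ => f l := fun l => by simp [f]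
  have hf0 : f ((0 : ℤ) : ℝ) = 1 := by simp [f]
  rw [tsum_int_eq_zero_add_two_mul_tsum_pnat heven hf]
  simp only [Int.cast_natCast]
  rw [tsum_pnat_eq_tsum_succ (f := fun l : ℕ => f l), hf0, nsmul_eq_mul]
  linarith

theorem inv_sqrt_le_tsum_exp_neg_pi_mul_int_sq {a : ℝ} (ha : 0 < a) :
    (√a)⁻¹ ≤ ∑' l : ℤ, exp (-π * a * l ^ 2) := by
  have hs : Summable fun l : ℤ => exp (-π / a * l ^ 2) := by
    simpa only [neg_div] using summable_exp_neg_mul_int_sq (div_pos pi_pos ha)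
  have hone : 1 ≤ ∑' l : ℤ, exp (-π / a * l ^ 2) := by
    simpa using hs.le_tsum 0 fun _ _ => (exp_pos _).le
  rw [Real.tsum_exp_neg_mul_int_sq ha, ← sqrt_eq_rpow, one_div]
  exact le_mul_of_one_le_right (inv_nonneg.2 (sqrt_nonneg a)) hone

section Norms

variable {N : Type*} [Fintype N]

theorem norm1_sumElim_neg_self (x : N → ℂ) : norm1 (Sum.elim (-x) x) = 2 * norm1 x := by
  simp only [norm1, Fintype.sum_sum_type, Sum.elim_inl, Sum.elim_inr, Pi.neg_apply, norm_neg]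
  ring

theorem norm2sq_sumElim_neg_self (x : N → ℂ) : norm2sq (Sum.elim (-x) x) = 2 * norm2sq x := by
  simp only [norm2sq, Fintype.sum_sum_type, Sum.elim_inl, Sum.elim_inr, Pi.neg_apply, norm_neg]
  ring

theorem ns_sumElim_neg_self (x : N → ℂ) : ns (Sum.elim (-x) x) = 2 * ns x := by
  rw [ns, ns, norm1_sumElim_neg_self, norm2sq_sumElim_neg_self, mul_pow, mul_div_mul_comm]
  norm_num

theorem norm1_ofReal {g : N → ℝ} (hg : ∀ i, 0 ≤ g i) : norm1 (fun i => (g i : ℂ)) = ∑ i, g i :=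
  Finset.sum_congr rfl fun i _ => Complex.norm_of_nonneg (hg i)

theorem norm2sq_ofReal (g : N → ℝ) : norm2sq (fun i => (g i : ℂ)) = ∑ i, g i ^ 2 :=
  Finset.sum_congr rfl fun i _ => by rw [Complex.norm_real, Real.norm_eq_abs, sq_abs]

end Norms

theorem tsum_sq_le_sq_tsum {ι : Type*} {f : ι → ℝ} (hf : Summable f) (hf0 : ∀ i, 0 ≤ f i) :
    ∑' i, f i ^ 2 ≤ (∑' i, f i) ^ 2 := by
  have hle : ∀ i, f i ^ 2 ≤ f i * ∑' i, f i := fun i => by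
    rw [sq]
    exact mul_le_mul_of_nonneg_left (hf.le_tsum i fun j _ => hf0 j) (hf0 i)
  have hsq : Summable fun i => f i ^ 2 :=
    (hf.mul_right _).of_nonneg_of_le (fun i => sq_nonneg (f i)) hle
  calc ∑' i, f i ^ 2 ≤ ∑' i, f i * ∑' i, f i := hsq.tsum_le_tsum hle (hf.mul_right _)
    _ = (∑' i, f i) ^ 2 := by rw [tsum_mul_right, sq]

def zmodProdIntEquiv (n : ℕ) [NeZero n] : ZMod n × ℤ ≃ ℤ where
  toFun p := p.1.val + p.2 * n
  invFun l := (l, l / n)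
  left_inv := fun ⟨j, m⟩ => by
    have hn : (0 : ℤ) < n := by exact_mod_cast Nat.pos_of_neZero n
    refine Prod.ext ?_ ?_
    · simp
    · simp only
      rw [Int.add_mul_ediv_right _ _ hn.ne', Int.ediv_eq_zero_of_lt (by positivity)
        (by exact_mod_cast ZMod.val_lt j), zero_add]
  right_inv l := by
    simp only [ZMod.val_intCast]
    exact Int.emod_add_ediv_mul l n

noncomputable def periodize {α : Type*} [AddCommMonoid α] [TopologicalSpace α] (n : ℕ)
    (f : ℤ → α) (j : ZMod n) : α :=
  ∑' m : ℤ, f (j.val + m * n)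

section Periodize

variable {α : Type*} [AddCommGroup α] [UniformSpace α] [IsUniformAddGroup α] [CompleteSpace α]
  {n : ℕ} [NeZero n] {f : ℤ → α}

theorem summable_comp_val_add_mul (hf : Summable f) (j : ZMod n) :
    Summable fun m : ℤ => f (j.val + m * n) :=
  hf.comp_injective fun _ _ h =>
    mul_right_cancel₀ (Int.natCast_ne_zero.2 (NeZero.ne n)) (add_left_cancel h)

theorem sum_periodize [T3Space α] (hf : Summable f) :
    ∑ j : ZMod n, periodize n f j = ∑' l, f l := by
  have he : Summable (f ∘ zmodProdIntEquiv n) := (zmodProdIntEquiv n).summable_iff.2 hf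
  calc ∑ j : ZMod n, periodize n f j = ∑' (j : ZMod n) (m : ℤ), (f ∘ zmodProdIntEquiv n) (j, m) :=
        (tsum_fintype _).symm
    _ = ∑' p, (f ∘ zmodProdIntEquiv n) p := (he.tsum_prod' (summable_comp_val_add_mul hf)).symm
    _ = ∑' l, f l := (zmodProdIntEquiv n).tsum_eq f

end Periodize

theorem tsum_exp_neg_quadratic_mul_exp_eq {n : ℕ} [NeZero n] (x : ℝ) :
    ∑' l : ℤ, cexp (-(π / n) * l ^ 2 - 2 * π * Complex.I * l * x / n) =
      √n * ∑' m : ℤ, exp (-(π / n) * (x + m * n) ^ 2) := by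
  have hn : (n : ℂ) ≠ 0 := Nat.cast_ne_zero.2 (NeZero.ne n)
  set a : ℂ := (((n : ℝ)⁻¹ : ℝ) : ℂ)
  set b : ℂ := -(Complex.I * x / n)
  have ha : 0 < a.re := by
    rw [Complex.ofReal_re]
    exact inv_pos.2 (Nat.cast_pos.2 n.pos_of_neZero)
  have hsqrt : 1 / a ^ (1 / 2 : ℂ) = (√n : ℂ) := by
    rw [show (1 / 2 : ℂ) = ((1 / 2 : ℝ) : ℂ) by norm_num, ← Complex.ofReal_cpow (by positivity),
      ← sqrt_eq_rpow, sqrt_inv, Complex.ofReal_inv, one_div, inv_inv]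
  calc ∑' l : ℤ, cexp (-(π / n) * l ^ 2 - 2 * π * Complex.I * l * x / n)
      = ∑' l : ℤ, cexp (-π * a * l ^ 2 + 2 * π * b * l) := tsum_congr fun l => by
        congr 1
        simp only [a, b]
        push_cast
        field_simp
        ring
    _ = √n * ∑' l : ℤ, cexp (-π / a * (l + Complex.I * b) ^ 2) := by
        rw [Complex.tsum_exp_neg_quadratic ha, hsqrt]
    _ = √n * ∑' m : ℤ, exp (-(π / n) * (x + m * n) ^ 2) := by
        rw [Complex.ofReal_tsum]
        refine congrArg _ (tsum_congr fun m => ?_)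
        have hIb : Complex.I * b = x / n := by
          simp only [b]
          rw [mul_neg, ← mul_div_assoc, ← mul_assoc, Complex.I_mul_I]
          ring
        rw [Complex.ofReal_exp, hIb]
        congr 1
        simp only [a]
        push_cast
        field_simp
        ring

noncomputable def periodicGaussian (n : ℕ) : ZMod n → ℝ :=
  periodize n fun l : ℤ => exp (-(π / n) * l ^ 2)

theorem periodicGaussian_nonneg {n : ℕ} (j : ZMod n) : 0 ≤ periodicGaussian n j :=
  tsum_nonneg fun _ => (exp_pos _).le

section PeriodicGaussian

variable {n : ℕ} [NeZero n]

theorem summable_exp_neg_pi_div_mul_int_sq :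
    Summable fun l : ℤ => exp (-(π / n) * l ^ 2) :=
  summable_exp_neg_mul_int_sq (div_pos pi_pos (Nat.cast_pos.2 n.pos_of_neZero))

theorem sum_periodicGaussian_le : ∑ j, periodicGaussian n j ≤ √n + 1 := by
  have hn : (0 : ℝ) < n := Nat.cast_pos.2 n.pos_of_neZero
  rw [periodicGaussian, sum_periodize summable_exp_neg_pi_div_mul_int_sq, add_comm]
  convert tsum_exp_neg_mul_int_sq_le (div_pos pi_pos hn) using 3
  field_simp

theorem sqrt_half_le_sum_periodicGaussian_sq : √(n / 2) ≤ ∑ j, periodicGaussian n j ^ 2 := by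
  have hn : (0 : ℝ) < n := Nat.cast_pos.2 n.pos_of_neZero
  have hsq : Summable fun l : ℤ => exp (-π * (2 / n) * l ^ 2) := by
    simpa only [neg_mul] using summable_exp_neg_mul_int_sq (by positivity : 0 < π * (2 / n))
  calc √(n / 2) = (√(2 / n))⁻¹ := by rw [← sqrt_inv, inv_div]
    _ ≤ ∑' l : ℤ, exp (-π * (2 / n) * l ^ 2) :=
        inv_sqrt_le_tsum_exp_neg_pi_mul_int_sq (by positivity)
    _ = ∑ j, periodize n (fun l : ℤ => exp (-π * (2 / n) * l ^ 2)) j := (sum_periodize hsq).symm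
    _ ≤ ∑ j, periodicGaussian n j ^ 2 := Finset.sum_le_sum fun j _ => by
        refine le_of_eq_of_le (tsum_congr fun m => ?_)
          (tsum_sq_le_sq_tsum (summable_comp_val_add_mul summable_exp_neg_pi_div_mul_int_sq j)
            fun _ => (exp_pos _).le)
        rw [← exp_nat_mul]
        dsimp only
        congr 1
        push_cast
        ring

theorem dftMatrix_mulVec_periodicGaussian :
    (dftMatrix n).mulVec (fun j => (periodicGaussian n j : ℂ)) =
      fun k => (periodicGaussian n k : ℂ) := by
  funext k
  have hn : (n : ℂ) ≠ 0 := Nat.cast_ne_zero.2 (NeZero.ne n)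
  set F : ℤ → ℂ := fun l => cexp (-(π / n) * l ^ 2 - 2 * π * Complex.I * l * (k.val : ℝ) / n)
  have hF : Summable F := by
    refine Summable.of_norm ((summable_exp_neg_pi_div_mul_int_sq (n := n)).congr fun l => ?_)
    have hreim : -(π / n) * (l : ℂ) ^ 2 - 2 * π * Complex.I * l * (k.val : ℝ) / n =
        ((-(π / n) * l ^ 2 : ℝ) : ℂ) + ((-(2 * π * l * k.val / n)) : ℝ) * Complex.I := by
      push_cast
      ring
    simp only [F, hreim, Complex.norm_exp, Complex.add_re, Complex.ofReal_re, Complex.mul_I_re,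
      Complex.ofReal_im, neg_zero, add_zero]
  have hfold : ∀ j : ZMod n, (periodicGaussian n j : ℂ) *
      cexp (-(2 * π * Complex.I * j.val * k.val) / n) = periodize n F j := fun j => by
    rw [periodicGaussian, periodize, periodize, Complex.ofReal_tsum, ← tsum_mul_right]
    refine tsum_congr fun m => ?_
    -- the character `l ↦ exp (-2πi l k / n)` is `n`-periodic
    have hsplit : -(π / n) * ((j.val + m * n : ℤ) : ℂ) ^ 2
        - 2 * π * Complex.I * ((j.val + m * n : ℤ) : ℂ) * (k.val : ℝ) / n
        = ((-(π / n) * ((j.val + m * n : ℤ) : ℝ) ^ 2 : ℝ) : ℂ)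
          + -(2 * π * Complex.I * j.val * k.val) / n
          + (-(m * k.val) : ℤ) * (2 * π * Complex.I) := by
      push_cast
      field_simp
      ring
    simp only [F]
    rw [hsplit, Complex.exp_add, Complex.exp_add, Complex.exp_int_mul_two_pi_mul_I, mul_one,
      Complex.ofReal_exp]
  have hpoisson := tsum_exp_neg_quadratic_mul_exp_eq (n := n) (k.val : ℝ)
  have hsqrt : ((1 / √n : ℝ) : ℂ) * √n = 1 := by
    rw [← Complex.ofReal_mul, one_div_mul_cancel (sqrt_ne_zero'.2 (Nat.cast_pos.2 n.pos_of_neZero)),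
      Complex.ofReal_one]
  calc (dftMatrix n).mulVec (fun j => (periodicGaussian n j : ℂ)) k
      = ((1 / √n : ℝ) : ℂ) * ∑ j, (periodicGaussian n j : ℂ) *
          cexp (-(2 * π * Complex.I * j.val * k.val) / n) := by
        simp only [Matrix.mulVec, dotProduct, dftMatrix, Matrix.of_apply, Finset.mul_sum]
        exact Finset.sum_congr rfl fun j _ => by ring
    _ = ((1 / √n : ℝ) : ℂ) * ∑' l, F l := by simp only [hfold, sum_periodize hF]
    _ = periodicGaussian n k := by
        rw [hpoisson, ← mul_assoc, hsqrt, one_mul, periodicGaussian, periodize]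
        push_cast
        rfl

end PeriodicGaussian

theorem square_root_bottleneck_general (n : ℕ) [NeZero n] (hn : 3 ≤ n) (k : ℕ)
    (c : ℝ)
    (hwidth : ∀ v : (ZMod n ⊕ ZMod n) → ℂ,
      (Matrix.fromCols (1 : Matrix (ZMod n) (ZMod n) ℂ) (dftMatrix n)).mulVec v = 0 →
      Real.sqrt (norm2sq v) ≤ c / Real.sqrt k * norm1 v) :
    (k : ℝ) ≤ 2 * c ^ 2 * (Real.sqrt n + 1) ^ 2 / (Real.sqrt ((n : ℝ) / 2) - 1) := by
  set g := periodicGaussian n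
  set x : ZMod n → ℂ := fun j => (g j : ℂ)
  have hnull : (Matrix.fromCols 1 (dftMatrix n)).mulVec (Sum.elim (-x) x) = 0 := by
    rw [Matrix.fromCols_mulVec_sumElim, Matrix.one_mulVec, dftMatrix_mulVec_periodicGaussian,
      neg_add_cancel]
  have hden : 0 < √(n / 2) - 1 := by
    rw [sub_pos, lt_sqrt zero_le_one]
    have : (3 : ℝ) ≤ n := by exact_mod_cast hn
    linarith
  have hg2 : √(n / 2) - 1 ≤ ∑ j, g j ^ 2 := by
    linarith [sqrt_half_le_sum_periodicGaussian_sq (n := n)]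
  have hg1 : 0 ≤ ∑ j, g j := Finset.sum_nonneg fun j _ => periodicGaussian_nonneg j
  have hk := natCast_le_sq_mul_ns_of_sqrt_norm2sq_le
    (by rw [norm2sq_sumElim_neg_self, norm2sq_ofReal]; linarith) (hwidth _ hnull)
  rw [ns_sumElim_neg_self, ns, norm1_ofReal periodicGaussian_nonneg, norm2sq_ofReal] at hk
  calc (k : ℝ) ≤ 2 * c ^ 2 * ((∑ j, g j) ^ 2 / ∑ j, g j ^ 2) := hk.trans_eq (by ring)
    _ ≤ 2 * c ^ 2 * ((√n + 1) ^ 2 / (√(n / 2) - 1)) :=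
        mul_le_mul_of_nonneg_left (div_le_div₀ (by positivity)
          (pow_le_pow_left₀ hg1 sum_periodicGaussian_le 2) hden hg2) (by positivity)
    _ = 2 * c ^ 2 * (√n + 1) ^ 2 / (√(n / 2) - 1) := (mul_div_assoc _ _ _).symm

/-- The square-root bottleneck for demixing with `[I F]`: if the concatenation `[I F]`
of the identity with the DFT matrix satisfies the `(k,c)`-width property, then
`k ≤ 2c²(√n + 1)²/(√(n/2) − 1)`, i.e. `k = O(√n)`. -/
theorem square_root_bottleneck (n : ℕ) [NeZero n] (hn : 3 ≤ n) (k : ℕ) (hk : 0 < k)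
    (c : ℝ) (hc : 0 < c)
    (hwidth : ∀ v : (ZMod n ⊕ ZMod n) → ℂ,
      (Matrix.fromCols (1 : Matrix (ZMod n) (ZMod n) ℂ) (dftMatrix n)).mulVec v = 0 →
      Real.sqrt (norm2sq v) ≤ c / Real.sqrt k * norm1 v) :
    (k : ℝ) ≤ 2 * c ^ 2 * (Real.sqrt n + 1) ^ 2 / (Real.sqrt ((n : ℝ) / 2) - 1) :=
  square_root_bottleneck_general n hn k c hwidth
end
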